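/- Under the contact and conformality conditions on the Heisenberg group, the function g satisfies ỸX̃₁²g = 0 everywhere on ℝ³ (and consequently ỸX̃₂²g = 0). -/

import Mathlib

/-- The left-invariant vector field `X̃₁ = ∂/∂x₁` of the 3-dimensional Heisenberg group,
acting on functions of `(x₁, x₂, y) ∈ ℝ³`. -/
noncomputable def Xone (u : ℝ × ℝ × ℝ → ℝ) (p : ℝ × ℝ × ℝ) : ℝ :=
  fderiv ℝ u p (1, 0, 0)

/-- The left-invariant vector field `X̃₂ = ∂/∂x₂ + x₁ ∂/∂y` of the Heisenberg group. -/
noncomputable def Xtwo (u : ℝ × ℝ × ℝ → ℝ) (p : ℝ × ℝ × ℝ) : ℝ :=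
  fderiv ℝ u p (0, 1, 0) + p.1 * fderiv ℝ u p (0, 0, 1)

/-- The left-invariant vector field `Ỹ = ∂/∂y` of the Heisenberg group. -/
noncomputable def Yvf (u : ℝ × ℝ × ℝ → ℝ) (p : ℝ × ℝ × ℝ) : ℝ :=
  fderiv ℝ u p (0, 0, 1)

private lemma smoothD {u : ℝ × ℝ × ℝ → ℝ} (hu : ContDiff ℝ (⊤ : ℕ∞) u) (v : ℝ × ℝ × ℝ) :
    ContDiff ℝ (⊤ : ℕ∞) (fun p => fderiv ℝ u p v) :=
  (hu.fderiv_right (by simp)).clm_apply contDiff_const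

private lemma diffD {u : ℝ × ℝ × ℝ → ℝ} (hu : ContDiff ℝ (⊤ : ℕ∞) u) (v : ℝ × ℝ × ℝ) :
    Differentiable ℝ (fun p => fderiv ℝ u p v) :=
  (smoothD hu v).differentiable (by simp)

private lemma Dcomm {u : ℝ × ℝ × ℝ → ℝ} (hu : ContDiff ℝ (⊤ : ℕ∞) u) (v w p : ℝ × ℝ × ℝ) :
    fderiv ℝ (fun q => fderiv ℝ u q v) p w = fderiv ℝ (fun q => fderiv ℝ u q w) p v := by
  have hd : DifferentiableAt ℝ (fderiv ℝ u) p :=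
    ((hu.fderiv_right (m := (⊤ : ℕ∞)) (by simp)).differentiable (by simp)) p
  rw [fderiv_clm_apply hd (differentiableAt_const v),
      fderiv_clm_apply hd (differentiableAt_const w)]
  simp only [fderiv_const_apply, fderiv_const, Pi.zero_apply, ContinuousLinearMap.comp_zero, zero_add,
    ContinuousLinearMap.add_apply, ContinuousLinearMap.flip_apply,
    ContinuousLinearMap.zero_apply]
  exact (hu.contDiffAt.isSymmSndFDerivAt (by simp [minSmoothness_of_isRCLikeNormedField]; exact WithTop.coe_le_coe.mpr le_top)).eq w v

private lemma fstmul {w : ℝ × ℝ × ℝ → ℝ} (hw : Differentiable ℝ w) (p v : ℝ × ℝ × ℝ) :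
    fderiv ℝ (fun q => q.1 * w q) p v = v.1 * w p + p.1 * fderiv ℝ w p v := by
  rw [fderiv_fun_mul differentiableAt_fst (hw p)]
  simp only [ContinuousLinearMap.add_apply, ContinuousLinearMap.smul_apply, smul_eq_mul]
  rw [fderiv_fst]
  simp only [ContinuousLinearMap.coe_fst']
  ring

private lemma smoothYvf {u : ℝ × ℝ × ℝ → ℝ} (hu : ContDiff ℝ (⊤ : ℕ∞) u) :
    ContDiff ℝ (⊤ : ℕ∞) (Yvf u) := smoothD hu _

private lemma smoothXtwo {u : ℝ × ℝ × ℝ → ℝ} (hu : ContDiff ℝ (⊤ : ℕ∞) u) :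
    ContDiff ℝ (⊤ : ℕ∞) (Xtwo u) :=
  (smoothD hu _).add (contDiff_fst.mul (smoothD hu _))

-- commutators
private lemma commYX1 {u : ℝ × ℝ × ℝ → ℝ} (hu : ContDiff ℝ (⊤ : ℕ∞) u) (p : ℝ × ℝ × ℝ) :
    Yvf (Xone u) p = Xone (Yvf u) p :=
  Dcomm hu (1,0,0) (0,0,1) p

private lemma commYX2 {u : ℝ × ℝ × ℝ → ℝ} (hu : ContDiff ℝ (⊤ : ℕ∞) u) (p : ℝ × ℝ × ℝ) :
    Yvf (Xtwo u) p = Xtwo (Yvf u) p := by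
  show fderiv ℝ (fun q => fderiv ℝ u q (0,1,0) + q.1 * fderiv ℝ u q (0,0,1)) p (0,0,1) = _
  rw [fderiv_fun_add (diffD hu (0,1,0) p) ((differentiableAt_fst).fun_mul (diffD hu (0,0,1) p))]
  show fderiv ℝ (fun q => fderiv ℝ u q (0,1,0)) p (0,0,1)
      + fderiv ℝ (fun q => q.1 * fderiv ℝ u q (0,0,1)) p (0,0,1) = _
  rw [fstmul (diffD hu (0,0,1)) p (0,0,1), Dcomm hu (0,1,0) (0,0,1) p]
  show _ = fderiv ℝ (fun q => fderiv ℝ u q (0,0,1)) p (0,1,0)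
      + p.1 * fderiv ℝ (fun q => fderiv ℝ u q (0,0,1)) p (0,0,1)
  norm_num

private lemma commX1X2 {u : ℝ × ℝ × ℝ → ℝ} (hu : ContDiff ℝ (⊤ : ℕ∞) u) (p : ℝ × ℝ × ℝ) :
    Xone (Xtwo u) p = Xtwo (Xone u) p + Yvf u p := by
  show fderiv ℝ (fun q => fderiv ℝ u q (0,1,0) + q.1 * fderiv ℝ u q (0,0,1)) p (1,0,0) = _
  rw [fderiv_fun_add (diffD hu (0,1,0) p) ((differentiableAt_fst).fun_mul (diffD hu (0,0,1) p))]
  show fderiv ℝ (fun q => fderiv ℝ u q (0,1,0)) p (1,0,0)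
      + fderiv ℝ (fun q => q.1 * fderiv ℝ u q (0,0,1)) p (1,0,0) = _
  rw [fstmul (diffD hu (0,0,1)) p (1,0,0), Dcomm hu (0,1,0) (1,0,0) p,
      Dcomm hu (0,0,1) (1,0,0) p]
  show _ = (fderiv ℝ (fun q => fderiv ℝ u q (1,0,0)) p (0,1,0)
      + p.1 * fderiv ℝ (fun q => fderiv ℝ u q (1,0,0)) p (0,0,1)) + fderiv ℝ u p (0,0,1)
  norm_num
  ring
-- operator linearity lemmas (to be appended)
private lemma XoneNeg (u : ℝ × ℝ × ℝ → ℝ) :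
    Xone (fun q => -(u q)) = fun p => -(Xone u p) := by
  funext p; show fderiv ℝ (fun q => -(u q)) p (1,0,0) = _
  rw [fderiv_fun_neg]; rfl

private lemma XtwoNeg (u : ℝ × ℝ × ℝ → ℝ) :
    Xtwo (fun q => -(u q)) = fun p => -(Xtwo u p) := by
  funext p
  show fderiv ℝ (fun q => -(u q)) p (0,1,0) + p.1 * fderiv ℝ (fun q => -(u q)) p (0,0,1) = _
  rw [fderiv_fun_neg]
  show -(fderiv ℝ u p) (0,1,0) + p.1 * (-(fderiv ℝ u p)) (0,0,1) = -(Xtwo u p)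
  simp [Xtwo]; ring

private lemma YvfNeg (u : ℝ × ℝ × ℝ → ℝ) :
    Yvf (fun q => -(u q)) = fun p => -(Yvf u p) := by
  funext p; show fderiv ℝ (fun q => -(u q)) p (0,0,1) = _
  rw [fderiv_fun_neg]; rfl

private lemma XoneSmul (c : ℝ) {u : ℝ × ℝ × ℝ → ℝ} (hu : Differentiable ℝ u) (p : ℝ × ℝ × ℝ) :
    Xone (fun q => c * u q) p = c * Xone u p := by
  show fderiv ℝ (fun q => c * u q) p (1,0,0) = _
  rw [fderiv_const_mul (hu p)]; rfl

private lemma XtwoSmul (c : ℝ) {u : ℝ × ℝ × ℝ → ℝ} (hu : Differentiable ℝ u) (p : ℝ × ℝ × ℝ) :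
    Xtwo (fun q => c * u q) p = c * Xtwo u p := by
  show fderiv ℝ (fun q => c * u q) p (0,1,0) + p.1 * fderiv ℝ (fun q => c * u q) p (0,0,1) = _
  rw [fderiv_const_mul (hu p)]
  show c * fderiv ℝ u p (0,1,0) + p.1 * (c * fderiv ℝ u p (0,0,1)) = c * Xtwo u p
  simp [Xtwo]; ring

/-- Under the contact and conformality conditions on the Heisenberg group, `ỸX̃₁²g = 0` (and consequently `ỸX̃₂²g = 0`) everywhere on ℝ³. -/
theorem statement18 (f₁ f₂ g : ℝ × ℝ × ℝ → ℝ)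
    (hf₁ : ContDiff ℝ (⊤ : ℕ∞) f₁) (hf₂ : ContDiff ℝ (⊤ : ℕ∞) f₂) (hg : ContDiff ℝ (⊤ : ℕ∞) g)
    (hcontact₁ : ∀ p, Xone g p = -f₂ p) (hcontact₂ : ∀ p, Xtwo g p = f₁ p)
    (hconf₁ : ∀ p, Xone f₁ p = Xtwo f₂ p) (hconf₂ : ∀ p, Xtwo f₁ p = -(Xone f₂ p)) :
    ∀ p, Yvf (Xone (Xone g)) p = 0 ∧ Yvf (Xtwo (Xtwo g)) p = 0 := by
  have dφ : Differentiable ℝ (Yvf g) := (smoothYvf hg).differentiable (by simp)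
  have dYf₁ : Differentiable ℝ (Yvf f₁) := (smoothYvf hf₁).differentiable (by simp)
  have dYf₂ : Differentiable ℝ (Yvf f₂) := (smoothYvf hf₂).differentiable (by simp)
  have hXg1 : Xone g = fun q => -(f₂ q) := funext hcontact₁
  have hXg2 : Xtwo g = f₁ := funext hcontact₂
  -- X₁ f₁ = X₂ f₂ = (1/2) Yg
  have hXf1 : Xone f₁ = fun q => 2⁻¹ * Yvf g q := by
    funext q
    have h1 := commX1X2 hg q
    rw [hXg2, hXg1, XtwoNeg] at h1
    simp only at h1
    have h2 := hconf₁ q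
    linarith
  have hXf2 : Xtwo f₂ = fun q => 2⁻¹ * Yvf g q := by
    funext q; rw [← hconf₁ q, hXf1]
  -- X₂ (Yg) = Y f₁ , X₁ (Yg) = -Y f₂
  have hYf1 : ∀ q, Xtwo (Yvf g) q = Yvf f₁ q := by
    intro q; rw [← commYX2 hg q, hXg2]
  have hYf2 : ∀ q, Xone (Yvf g) q = -(Yvf f₂ q) := by
    intro q
    have := commYX1 hg q
    rw [hXg1, YvfNeg] at this
    simp only at this
    linarith
  -- set h := Xtwo f₁
  have hh2 : Xtwo f₁ = fun q => -(Xone f₂ q) := funext hconf₂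
  have hX1h : Xone (Xtwo f₁) = fun q => (3/2) * Yvf f₁ q := by
    funext q
    have h1 := commX1X2 hf₁ q
    rw [hXf1] at h1
    rw [h1, XtwoSmul 2⁻¹ dφ q, hYf1 q]
    ring
  have hX2h : Xtwo (Xtwo f₁) = fun q => (3/2) * Yvf f₂ q := by
    funext q
    have h1 := commX1X2 hf₂ q
    rw [hXf2, XoneSmul 2⁻¹ dφ q, hYf2 q] at h1
    rw [hh2, XtwoNeg]
    simp only
    linarith
  have hXf2' : Xone f₂ = fun q => -(Xtwo f₁ q) := by
    funext q; have := hconf₂ q; linarith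
  -- key: Y (X₂ f₁) = 0
  have KY : ∀ q, Yvf (Xtwo f₁) q = 0 := by
    intro q
    have h1 := commX1X2 (smoothXtwo hf₁) q
    rw [hX2h, hX1h] at h1
    rw [XoneSmul (3/2) dYf₂ q, XtwoSmul (3/2) dYf₁ q] at h1
    rw [← commYX1 hf₂ q, ← commYX2 hf₁ q] at h1
    rw [hXf2', YvfNeg] at h1
    simp only at h1
    linarith
  intro p
  constructor
  · have hxx : Xone (Xone g) = Xtwo f₁ := by
      rw [hXg1, XoneNeg, hh2]
    rw [hxx]; exact KY p
  · rw [hXg2, KY p]
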